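/- arXiv:1112.3819 — 2 statements merged into one kernel-verified Lean document; each statement's English description precedes it below -/
import Mathlib

section
/- (Itô) If a nontrivial finite group G is the product G = AB of two abelian subgroups A and B, then A or B contains a nontrivial normal subgroup of G. -/
/-!
Let `D = ⁅A, B⁆`. Conjugation by `a * b` and by `b * a` agree on the generators `⁅a', b'⁆`
of `D` (Itô), which makes `D` abelian; since `G = AB`, `D` is moreover normal and contains every
commutator of `G`.

Suppose neither `A` nor `B` contains a nontrivial normal subgroup of `G`. Then `A` and `B` are
self-centralizing, `A ∩ B = 1`, and both act faithfully on `D`. For `v ∈ D` let `β v` be the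
element of `B` in the coset `v A`. Then `u ⋆ v = ⁅β u, v⁆` is the multiplication of a finite
commutative ring structure on the abelian group `D` whose circle group is `B`, and this ring has no
nonzero idempotents. Such a ring has a nonzero annihilator `z`; then `β z` centralizes `D`, so
`z⁻¹ * β z ∈ A` acts trivially on `D`, whence `β z = z ∈ B ∩ D = 1`. So `D = 1`, `G` is abelian,
and `A = B = 1`.
-/

open Subgroup
open scoped commutatorElement

section NilSemigroup

variable {S : Type*} [SemigroupWithZero S] [Finite S]

theorem eq_zero_of_mul_eq_self (h : ∀ e : S, IsIdempotentElem e → e = 0) {w z : S}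
    (hwz : w * z = z) : z = 0 := by
  -- A finite semigroup is compact in the discrete topology: apply the Ellis–Nakamura lemma.
  let _ : TopologicalSpace S := ⊥
  have : DiscreteTopology S := ⟨rfl⟩
  obtain ⟨e, he, hee⟩ := exists_idempotent_in_compact_subsemigroup
    (fun _ => continuous_of_discreteTopology) {x | x * z = z} ⟨w, hwz⟩
    (Set.toFinite _).isCompact fun x hx y hy => by
      simp only [Set.mem_ofPred_eq] at hx hy ⊢
      rw [mul_assoc, hy, hx]
  rw [← he, h e hee, zero_mul]

theorem exists_ne_zero_forall_mul_eq_zero [Nontrivial S]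
    (h : ∀ e : S, IsIdempotentElem e → e = 0) : ∃ z ≠ (0 : S), ∀ u, u * z = 0 := by
  -- If the left ideal `S * z` is minimal and `u * z ≠ 0`, then `u * z ∈ S * (u * z)`.
  obtain ⟨z, hz, hmin⟩ := exists_minimalFor_of_wellFoundedLT (fun z : S => z ≠ 0)
    (fun z => Set.range (· * z)) (exists_ne 0)
  refine ⟨z, hz, fun u => by_contra fun huz => huz ?_⟩
  have hle : Set.range (· * (u * z)) ⊆ Set.range (· * z) := by
    rintro _ ⟨w, rfl⟩
    exact ⟨w * u, mul_assoc w u z⟩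
  obtain ⟨w, hw⟩ := hmin huz hle ⟨u, rfl⟩
  exact eq_zero_of_mul_eq_self h hw

end NilSemigroup

section Commutators

variable {G : Type*} [Group G]

theorem commutatorElement_mul_right_of_commute {x y c : G} (h : Commute x c) :
    ⁅x, y * c⁆ = ⁅x, y⁆ := by
  simp only [commutatorElement_def, mul_inv_rev, mul_assoc, mul_right_inj]
  rw [← mul_assoc c, ← h.inv_left.eq, mul_assoc, mul_inv_cancel_left]

theorem commutatorElement_mul_left_of_commute {x y c : G} (h : Commute c y) :
    ⁅x * c, y⁆ = ⁅x, y⁆ := by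
  rw [← inv_inj, commutatorElement_inv, commutatorElement_inv,
    commutatorElement_mul_right_of_commute h.symm]

theorem conj_commutatorElement_eq_left {g x y y' c : G} (hg : Commute g x) (hc : Commute x c)
    (h : g * y * g⁻¹ = y' * c) : g * ⁅x, y⁆ * g⁻¹ = ⁅x, y'⁆ := by
  rw [conjugate_commutatorElement, hg.eq, mul_inv_cancel_right, h,
    commutatorElement_mul_right_of_commute hc]

theorem conj_commutatorElement_eq_right {g x x' y c : G} (hg : Commute g y) (hc : Commute c y)
    (h : g * x * g⁻¹ = x' * c) : g * ⁅x, y⁆ * g⁻¹ = ⁅x', y⁆ := by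
  rw [conjugate_commutatorElement, hg.eq, mul_inv_cancel_right, h,
    commutatorElement_mul_left_of_commute hc]

theorem Subgroup.Normal.commutatorElement_mem {N : Subgroup G} [hN : N.Normal] (g : G) {x : G}
    (hx : x ∈ N) : ⁅g, x⁆ ∈ N :=
  N.mul_mem (hN.conj_mem x hx g) (N.inv_mem hx)

theorem Subgroup.commutatorElement_mul_right_of_isMulCommutative {N : Subgroup G} [N.Normal]
    [IsMulCommutative N] (g : G) {x y : G} (hx : x ∈ N) (hy : y ∈ N) :
    ⁅g, x * y⁆ = ⁅g, x⁆ * ⁅g, y⁆ := by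
  rw [commutatorElement_mul_right_eq_mul_conj, mul_assoc _ x, mul_assoc,
    setLike_mul_comm hx (Normal.commutatorElement_mem g hy), mul_inv_cancel_right]

theorem Subgroup.normal_of_commutator_le {H : Subgroup G} (h : _root_.commutator G ≤ H) :
    H.Normal :=
  commutator_top_left_le_iff.mp ((commutator_mono le_rfl le_top).trans h)

end Commutators

section Ito

variable {G : Type*} [Group G] {A B : Subgroup G}

theorem exists_mul_swap (hAB : ∀ g : G, ∃ a ∈ A, ∃ b ∈ B, g = a * b) (g : G) :
    ∃ b ∈ B, ∃ a ∈ A, g = b * a := by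
  obtain ⟨a, ha, b, hb, h⟩ := hAB g⁻¹
  exact ⟨b⁻¹, B.inv_mem hb, a⁻¹, A.inv_mem ha, by rw [← mul_inv_rev, ← h, inv_inv]⟩

theorem sup_eq_top_of_forall_exists_mul (hAB : ∀ g : G, ∃ a ∈ A, ∃ b ∈ B, g = a * b) :
    A ⊔ B = ⊤ :=
  eq_top_iff.mpr fun g _ => by
    obtain ⟨a, ha, b, hb, rfl⟩ := hAB g
    exact mul_mem (mem_sup_left ha) (mem_sup_right hb)

theorem commutator_normal_of_forall_exists_mul
    (hAB : ∀ g : G, ∃ a ∈ A, ∃ b ∈ B, g = a * b) : ⁅A, B⁆.Normal := by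
  rw [← normalizer_eq_top_iff, eq_top_iff, ← sup_eq_top_of_forall_exists_mul hAB]
  exact sup_le (normalizer_commutator_ge_left A B) (normalizer_commutator_ge_right A B)

theorem exists_conj_commutatorElement_eq_left [IsMulCommutative A]
    (hAB : ∀ g : G, ∃ a ∈ A, ∃ b ∈ B, g = a * b)
    {a₁ : G} (ha₁ : a₁ ∈ A) (b : G) : ∃ b' ∈ B, ∀ a ∈ A, a₁ * ⁅a, b⁆ * a₁⁻¹ = ⁅a, b'⁆ := by
  obtain ⟨b', hb', a', ha', h⟩ := exists_mul_swap hAB (a₁ * b * a₁⁻¹)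
  exact ⟨b', hb', fun a ha =>
    conj_commutatorElement_eq_left (setLike_mul_comm ha₁ ha) (setLike_mul_comm ha ha') h⟩

theorem exists_conj_commutatorElement_eq_right [IsMulCommutative B]
    (hAB : ∀ g : G, ∃ a ∈ A, ∃ b ∈ B, g = a * b)
    {b₁ : G} (hb₁ : b₁ ∈ B) (a : G) : ∃ a' ∈ A, ∀ b ∈ B, b₁ * ⁅a, b⁆ * b₁⁻¹ = ⁅a', b⁆ := by
  obtain ⟨a', ha', b', hb', h⟩ := hAB (b₁ * a * b₁⁻¹)
  exact ⟨a', ha', fun b hb =>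
    conj_commutatorElement_eq_right (setLike_mul_comm hb₁ hb) (setLike_mul_comm hb' hb) h⟩

theorem exists_conj_commutatorElement_eq_of_mem [IsMulCommutative A] [IsMulCommutative B]
    (hAB : ∀ g : G, ∃ a ∈ A, ∃ b ∈ B, g = a * b) {a₁ b₁ a b : G} (ha₁ : a₁ ∈ A) (hb₁ : b₁ ∈ B)
    (ha : a ∈ A) (hb : b ∈ B) : ∃ a' ∈ A, ∃ b' ∈ B,
      a₁ * b₁ * ⁅a, b⁆ * (a₁ * b₁)⁻¹ = ⁅a', b'⁆ ∧ b₁ * a₁ * ⁅a, b⁆ * (b₁ * a₁)⁻¹ = ⁅a', b'⁆ := by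
  obtain ⟨a', ha', h₁⟩ := exists_conj_commutatorElement_eq_right hAB hb₁ a
  obtain ⟨b', hb', h₂⟩ := exists_conj_commutatorElement_eq_left hAB ha₁ b
  refine ⟨a', ha', b', hb', ?_, ?_⟩
  · rw [show a₁ * b₁ * ⁅a, b⁆ * (a₁ * b₁)⁻¹ = a₁ * (b₁ * ⁅a, b⁆ * b₁⁻¹) * a₁⁻¹ by group,
      h₁ b hb, h₂ a' ha']
  · rw [show b₁ * a₁ * ⁅a, b⁆ * (b₁ * a₁)⁻¹ = b₁ * (a₁ * ⁅a, b⁆ * a₁⁻¹) * b₁⁻¹ by group,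
      h₂ a ha, h₁ b' hb']

variable [IsMulCommutative A] [IsMulCommutative B]

theorem commutator_le_commutator_of_forall_exists_mul
    (hAB : ∀ g : G, ∃ a ∈ A, ∃ b ∈ B, g = a * b) : _root_.commutator G ≤ ⁅A, B⁆ := by
  have := commutator_normal_of_forall_exists_mul hAB
  have hcomm {H : Subgroup G} [IsMulCommutative H] {x y : G} (hx : x ∈ H) (hy : y ∈ H) :
      Commute (x : G ⧸ ⁅A, B⁆) y := by
    simp only [Commute, SemiconjBy, ← QuotientGroup.mk_mul, setLike_mul_comm hx hy]
  have hcommAB {a b : G} (ha : a ∈ A) (hb : b ∈ B) : Commute (a : G ⧸ ⁅A, B⁆) b := by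
    have h := (QuotientGroup.eq_one_iff _).mpr (commutator_mem_commutator ha hb)
    rw [← QuotientGroup.mk'_apply, map_commutatorElement] at h
    exact commutatorElement_eq_one_iff_commute.mp h
  rw [← Normal.quotient_commutative_iff_commutator_le]
  refine ⟨⟨fun x y => ?_⟩⟩
  obtain ⟨g, rfl⟩ := QuotientGroup.mk_surjective x
  obtain ⟨h, rfl⟩ := QuotientGroup.mk_surjective y
  obtain ⟨a, ha, b, hb, rfl⟩ := hAB g
  obtain ⟨a', ha', b', hb', rfl⟩ := hAB h
  simp only [QuotientGroup.mk_mul]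
  exact ((hcomm ha ha').mul_right (hcommAB ha hb')).mul_left
    (((hcommAB ha' hb).symm).mul_right (hcomm hb hb')) |>.eq

theorem isMulCommutative_commutator_of_forall_exists_mul
    (hAB : ∀ g : G, ∃ a ∈ A, ∃ b ∈ B, g = a * b) : IsMulCommutative (⁅A, B⁆ : Subgroup G) := by
  set S : Set G := {g | ∃ a ∈ A, ∃ b ∈ B, ⁅a, b⁆ = g}
  have conj_mem (g : G) {s : G} (hs : s ∈ S) : g * s * g⁻¹ ∈ S := by
    obtain ⟨a₁, ha₁, b₁, hb₁, rfl⟩ := hAB g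
    obtain ⟨a, ha, b, hb, rfl⟩ := hs
    obtain ⟨a', ha', b', hb', h, -⟩ := exists_conj_commutatorElement_eq_of_mem hAB ha₁ hb₁ ha hb
    exact ⟨a', ha', b', hb', h.symm⟩
  have hS : S ⊆ centralizer S := by
    rintro _ ⟨a₁, ha₁, b₁, hb₁, rfl⟩ s hs
    obtain ⟨a, ha, b, hb, hab⟩ := conj_mem (b₁ * a₁)⁻¹ hs
    obtain ⟨a', ha', b', hb', h₁, h₂⟩ := exists_conj_commutatorElement_eq_of_mem hAB ha₁ hb₁ ha hb
    -- `⁅a₁, b₁⁆ = (a₁ * b₁) * (b₁ * a₁)⁻¹`, and the two conjugations agree on `S`.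
    rw [← h₂, hab] at h₁
    have : ⁅a₁, b₁⁆ * s * ⁅a₁, b₁⁆⁻¹ = s :=
      calc _ = a₁ * b₁ * ((b₁ * a₁)⁻¹ * s * (b₁ * a₁)⁻¹⁻¹) * (a₁ * b₁)⁻¹ := by
            rw [commutatorElement_def]; group
        _ = _ := h₁
        _ = s := by group
    exact (mul_inv_eq_iff_eq_mul.mp this).symm
  rw [Subgroup.commutator_def, ← le_centralizer_iff_isMulCommutative, centralizer_closure]
  exact (closure_le _).mpr hS

end Ito

section NormalCore

variable {G : Type*} [Group G] {A B : Subgroup G}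

theorem Subgroup.normal_of_le_center {H : Subgroup G} (h : H ≤ center G) : H.Normal :=
  ⟨fun x hx g => by rwa [mem_center_iff.mp (h hx) g, mul_inv_cancel_right]⟩

theorem centralizer_inf_le_normalCore [IsMulCommutative B]
    (hAB : ∀ g : G, ∃ a ∈ A, ∃ b ∈ B, g = a * b) : centralizer A ⊓ B ≤ B.normalCore := by
  have hle : centralizer A ⊓ B ≤ center G := by
    rintro x ⟨hxA, hxB⟩
    refine mem_center_iff.mpr fun g => ?_
    obtain ⟨a, ha, b, hb, rfl⟩ := hAB g
    rw [mul_assoc, setLike_mul_comm hb hxB, ← mul_assoc, hxA a ha, mul_assoc]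
  have := normal_of_le_center hle
  exact normal_le_normalCore.mpr inf_le_right

variable [IsMulCommutative A] [IsMulCommutative B]

theorem centralizer_eq_self_of_normalCore_eq_bot (hAB : ∀ g : G, ∃ a ∈ A, ∃ b ∈ B, g = a * b)
    (hB : B.normalCore = ⊥) : centralizer A = A := by
  refine le_antisymm (fun c hc => ?_) (le_centralizer A)
  obtain ⟨a, ha, b, hb, rfl⟩ := hAB c
  have hbA : b ∈ centralizer A := by
    simpa using mul_mem (le_centralizer A (inv_mem ha)) hc
  have : b = 1 := by simpa [hB] using centralizer_inf_le_normalCore hAB ⟨hbA, hb⟩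
  simpa [this] using ha

theorem inf_eq_bot_of_normalCore_eq_bot (hAB : ∀ g : G, ∃ a ∈ A, ∃ b ∈ B, g = a * b)
    (hB : B.normalCore = ⊥) : A ⊓ B = ⊥ :=
  le_bot_iff.mp <| hB ▸
    (inf_le_inf_right B (le_centralizer A)).trans (centralizer_inf_le_normalCore hAB)

theorem inf_centralizer_eq_bot_of_normalCore_eq_bot
    (hAB : ∀ g : G, ∃ a ∈ A, ∃ b ∈ B, g = a * b) (hA : A.normalCore = ⊥)
    (hB : B.normalCore = ⊥) {N : Subgroup G} (hN : _root_.commutator G ≤ N) :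
    A ⊓ centralizer N = ⊥ := by
  have := normal_of_commutator_le (hN.trans le_sup_right : _root_.commutator G ≤ A ⊔ N)
  have hC : centralizer (A ⊔ N : Subgroup G) ≤ A :=
    (centralizer_le (SetLike.coe_subset_coe.mpr le_sup_left)).trans
      (centralizer_eq_self_of_normalCore_eq_bot hAB hB).le
  have hle : A ⊓ centralizer N ≤ centralizer (A ⊔ N : Subgroup G) :=
    le_centralizer_iff.mpr <| sup_le
      (le_centralizer_iff.mp (inf_le_left.trans (le_centralizer A)))
      (le_centralizer_iff.mp inf_le_right)
  rw [← le_bot_iff, ← hA]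
  exact hle.trans (normal_le_normalCore.mpr hC)

end NormalCore

section Transversal

/- `β v` is the representative in `B` of the coset `v A`, and `⁅β u, v⁆` is the product `u ⋆ v`
of the ring structure on `D`. -/

variable {G : Type*} [Group G] {A B D : Subgroup G} {β : G → G}

theorem transversal_eq (hAB : A ⊓ B = ⊥) (hβ : ∀ v ∈ D, β v ∈ B ∧ v⁻¹ * β v ∈ A) {v b : G}
    (hv : v ∈ D) (hb : b ∈ B) (hvb : v⁻¹ * b ∈ A) : β v = b := by
  have h : (β v)⁻¹ * b ∈ A ⊓ B := mem_inf.mpr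
    ⟨by simpa [mul_assoc] using mul_mem (inv_mem (hβ v hv).2) hvb,
      mul_mem (inv_mem (hβ v hv).1) hb⟩
  rwa [hAB, mem_bot, inv_mul_eq_one] at h

theorem transversal_injOn (hAD : A ⊓ D = ⊥) (hβ : ∀ v ∈ D, β v ∈ B ∧ v⁻¹ * β v ∈ A) :
    Set.InjOn β D := by
  intro u hu v hv h
  have : u⁻¹ * v ∈ A ⊓ D := mem_inf.mpr
    ⟨by simpa [h, mul_assoc] using mul_mem (hβ u hu).2 (inv_mem (hβ v hv).2),
      mul_mem (inv_mem hu) hv⟩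
  rwa [hAD, mem_bot, inv_mul_eq_one] at this

variable [D.Normal] [IsMulCommutative D]

theorem transversal_mul (hAB : A ⊓ B = ⊥) (hβ : ∀ v ∈ D, β v ∈ B ∧ v⁻¹ * β v ∈ A) {u v : G}
    (hu : u ∈ D) (hv : v ∈ D) : β (u * (β u * v * (β u)⁻¹)) = β u * β v := by
  have hc : β u * v * (β u)⁻¹ ∈ D := Normal.conj_mem inferInstance v hv (β u)
  refine transversal_eq hAB hβ (mul_mem hu hc) (mul_mem (hβ u hu).1 (hβ v hv).1) ?_
  have : (u * (β u * v * (β u)⁻¹))⁻¹ * (β u * β v) = (u⁻¹ * β u) * (v⁻¹ * β v) := by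
    rw [mul_inv_rev, setLike_mul_comm (inv_mem hc) (inv_mem hu)]
    group
  rw [this]
  exact mul_mem (hβ u hu).2 (hβ v hv).2

variable [IsMulCommutative B]

theorem commutatorElement_transversal_comm (hAB : A ⊓ B = ⊥) (hAD : A ⊓ D = ⊥)
    (hβ : ∀ v ∈ D, β v ∈ B ∧ v⁻¹ * β v ∈ A) {u v : G} (hu : u ∈ D) (hv : v ∈ D) :
    ⁅β u, v⁆ = ⁅β v, u⁆ := by
  have hcirc {x y : G} : x * ⁅β x, y⁆ * y = x * (β x * y * (β x)⁻¹) := by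
    rw [commutatorElement_def]; group
  have hconj {x y : G} (hy : y ∈ D) : β x * y * (β x)⁻¹ ∈ D :=
    Normal.conj_mem inferInstance y hy (β x)
  have h : u * ⁅β u, v⁆ * v = v * ⁅β v, u⁆ * u := by
    rw [hcirc, hcirc]
    refine transversal_injOn hAD hβ (mul_mem hu (hconj hv)) (mul_mem hv (hconj hu)) ?_
    rw [transversal_mul hAB hβ hu hv, transversal_mul hAB hβ hv hu,
      setLike_mul_comm (hβ u hu).1 (hβ v hv).1]
  rw [setLike_mul_comm hu (Normal.commutatorElement_mem _ hv),
    setLike_mul_comm hv (Normal.commutatorElement_mem _ hu), mul_assoc, mul_assoc,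
    setLike_mul_comm hv hu] at h
  exact mul_right_cancel h

theorem commutatorElement_transversal_mul_left (hAB : A ⊓ B = ⊥) (hAD : A ⊓ D = ⊥)
    (hβ : ∀ v ∈ D, β v ∈ B ∧ v⁻¹ * β v ∈ A) {u v w : G} (hu : u ∈ D) (hv : v ∈ D)
    (hw : w ∈ D) : ⁅β (u * v), w⁆ = ⁅β u, w⁆ * ⁅β v, w⁆ := by
  rw [commutatorElement_transversal_comm hAB hAD hβ (mul_mem hu hv) hw,
    commutatorElement_mul_right_of_isMulCommutative _ hu hv,
    commutatorElement_transversal_comm hAB hAD hβ hw hu,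
    commutatorElement_transversal_comm hAB hAD hβ hw hv]

theorem commutatorElement_transversal_assoc (hAB : A ⊓ B = ⊥) (hAD : A ⊓ D = ⊥)
    (hβ : ∀ v ∈ D, β v ∈ B ∧ v⁻¹ * β v ∈ A) {u v w : G} (hu : u ∈ D) (hv : v ∈ D)
    (hw : w ∈ D) : ⁅β ⁅β u, v⁆, w⁆ = ⁅β u, ⁅β v, w⁆⁆ := by
  have hp := Normal.commutatorElement_mem (β u) hv
  have hq := Normal.commutatorElement_mem (β v) hw
  have h₁ : ⁅β (u * ⁅β u, v⁆ * v), w⁆ = ⁅β u, ⁅β v, w⁆⁆ * ⁅β v, w⁆ * ⁅β u, w⁆ := by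
    rw [show u * ⁅β u, v⁆ * v = u * (β u * v * (β u)⁻¹) by rw [commutatorElement_def]; group,
      transversal_mul hAB hβ hu hv, commutatorElement_mul_left_eq_conj_mul,
      show β u * ⁅β v, w⁆ * (β u)⁻¹ = ⁅β u, ⁅β v, w⁆⁆ * ⁅β v, w⁆ by
        rw [commutatorElement_def (β u)]; group]
  rw [commutatorElement_transversal_mul_left hAB hAD hβ (mul_mem hu hp) hv hw,
    commutatorElement_transversal_mul_left hAB hAD hβ hu hp hw,
    setLike_mul_comm (Normal.commutatorElement_mem _ hw) (Normal.commutatorElement_mem _ hw),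
    mul_assoc, mul_assoc, setLike_mul_comm hq (Normal.commutatorElement_mem _ hw)] at h₁
  exact mul_right_cancel h₁

theorem eq_one_of_commutatorElement_transversal_self (hAB : A ⊓ B = ⊥) (hAD : A ⊓ D = ⊥)
    (hβ : ∀ v ∈ D, β v ∈ B ∧ v⁻¹ * β v ∈ A) {e : G} (he : e ∈ D) (h : ⁅β e, e⁆ = e) :
    e = 1 := by
  have hinv : ⁅β e, e⁻¹⁆ = e⁻¹ := by
    have := commutatorElement_mul_right_of_isMulCommutative (β e) (inv_mem he) he
    rw [inv_mul_cancel, commutatorElement_one_right, h] at this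
    exact eq_inv_of_mul_eq_one_left this.symm
  rw [← commutatorElement_transversal_comm hAB hAD hβ (inv_mem he) he, commutatorElement_def,
    mul_eq_right, conj_eq_one_iff] at hinv
  exact hinv

end Transversal

theorem eq_bot_of_subset_mul_of_inf_centralizer_eq_bot {G : Type*} [Group G]
    {A B D : Subgroup G} [Finite D] [D.Normal] [IsMulCommutative D] [IsMulCommutative B]
    (hD : ∀ d ∈ D, ∃ b ∈ B, ∃ a ∈ A, d = b * a) (hAB : A ⊓ B = ⊥) (hBD : B ⊓ D = ⊥)
    (hAC : A ⊓ centralizer D = ⊥) : D = ⊥ := by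
  have hAD : A ⊓ D = ⊥ := le_bot_iff.mp (hAC ▸ inf_le_inf_left A (le_centralizer D))
  have hD' : ∀ d ∈ D, ∃ b, b ∈ B ∧ d⁻¹ * b ∈ A := fun d hd => by
    obtain ⟨b, hb, a, ha, rfl⟩ := hD d hd
    exact ⟨b, hb, by simpa using inv_mem ha⟩
  choose! β hβ using hD'
  by_contra hne
  have := (nontrivial_iff_ne_bot D).mpr hne
  -- `Additive D` has no multiplication of its own, so it can carry `⋆`.
  let _ : SemigroupWithZero (Additive D) :=
    { mul u v := .ofMul ⟨⁅β u.toMul, v.toMul⁆, Normal.commutatorElement_mem _ v.toMul.2⟩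
      mul_assoc u v w := congrArg Additive.ofMul <| Subtype.ext <|
        commutatorElement_transversal_assoc hAB hAD hβ u.toMul.2 v.toMul.2 w.toMul.2
      zero := 0
      zero_mul v := congrArg Additive.ofMul <| Subtype.ext <|
        (commutatorElement_transversal_comm hAB hAD hβ (one_mem D) v.toMul.2).trans
          (commutatorElement_one_right _)
      mul_zero u := congrArg Additive.ofMul <| Subtype.ext <| commutatorElement_one_right _ }
  obtain ⟨z, hz, hann⟩ := exists_ne_zero_forall_mul_eq_zero (S := Additive D) fun e he =>
    Additive.toMul.injective <| Subtype.ext <| eq_one_of_commutatorElement_transversal_self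
      hAB hAD hβ e.toMul.2 (congrArg (fun x : Additive D => (x.toMul : G)) he)
  set z' : G := ((z.toMul : D) : G)
  have hz' : z' ∈ D := z.toMul.2
  have hz1 : z' ≠ 1 := fun h => hz (Additive.toMul.injective (Subtype.ext h))
  have hcent : β z' ∈ centralizer D := mem_centralizer_iff_commutator_eq_one'.mpr fun u hu => by
    rw [commutatorElement_transversal_comm hAB hAD hβ hz' hu]
    exact congrArg (fun x : Additive D => (x.toMul : G)) (hann (.ofMul ⟨u, hu⟩))
  have ha : z'⁻¹ * β z' ∈ A ⊓ centralizer D :=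
    mem_inf.mpr ⟨(hβ z' hz').2, mul_mem (inv_mem (le_centralizer D hz')) hcent⟩
  rw [hAC, mem_bot, inv_mul_eq_one] at ha
  have hzB : z' ∈ B ⊓ D := mem_inf.mpr ⟨ha ▸ (hβ z' hz').1, hz'⟩
  rw [hBD, mem_bot] at hzB
  exact hz1 hzB

theorem normalCore_ne_bot_or_normalCore_ne_bot {G : Type*} [Group G] [Finite G] [Nontrivial G]
    {A B : Subgroup G} [IsMulCommutative A] [IsMulCommutative B]
    (hAB : ∀ g : G, ∃ a ∈ A, ∃ b ∈ B, g = a * b) : A.normalCore ≠ ⊥ ∨ B.normalCore ≠ ⊥ := by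
  by_contra! ⟨hA, hB⟩
  have hBA := exists_mul_swap hAB
  have := commutator_normal_of_forall_exists_mul hAB
  have := isMulCommutative_commutator_of_forall_exists_mul hAB
  have hle := commutator_le_commutator_of_forall_exists_mul hAB
  have hAD := inf_centralizer_eq_bot_of_normalCore_eq_bot hAB hA hB hle
  have hBD := inf_centralizer_eq_bot_of_normalCore_eq_bot hBA hB hA hle
  have hD : ⁅A, B⁆ = ⊥ := eq_bot_of_subset_mul_of_inf_centralizer_eq_bot (fun d _ => hBA d)
    (inf_eq_bot_of_normalCore_eq_bot hAB hB)
    (le_bot_iff.mp (hBD ▸ inf_le_inf_left B (le_centralizer _))) hAD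
  have hC : centralizer ((⊥ : Subgroup G) : Set G) = ⊤ :=
    centralizer_eq_top_iff_subset.mpr (SetLike.coe_subset_coe.mpr bot_le)
  rw [hD, hC, inf_top_eq] at hAD hBD
  obtain ⟨g, hg⟩ := exists_ne (1 : G)
  obtain ⟨a, ha, b, hb, rfl⟩ := hAB g
  rw [hAD, mem_bot] at ha
  rw [hBD, mem_bot] at hb
  simp [ha, hb] at hg

/-- (Itô) If a nontrivial finite group `G` is the product of two abelian subgroups
`A` and `B`, then `A` or `B` contains a nontrivial normal subgroup of `G`. -/
theorem stmt2 (G : Type) [Group G] [Fintype G] [Nontrivial G]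
    (A B : Subgroup G) (hA : IsMulCommutative A) (hB : IsMulCommutative B)
    (hAB : ∀ g : G, ∃ a ∈ A, ∃ b ∈ B, g = a * b) :
    ∃ K : Subgroup G, K.Normal ∧ K ≠ ⊥ ∧ (K ≤ A ∨ K ≤ B) := by
  rcases normalCore_ne_bot_or_normalCore_ne_bot hAB with h | h
  · exact ⟨_, inferInstance, h, .inl (normalCore_le A)⟩
  · exact ⟨_, inferInstance, h, .inr (normalCore_le B)⟩
end

section
/- Let G be a finite group, N ⊴ G, and M ⊴ G with N ≤ M such that N is a Hall subgroup of M (gcd(|N|,|M:N|)=1) and M/N is solvable. Let Q be a complement of N in M. Then G = N·N_G(Q) and N ∩ N_G(Q) = C_N(Q). -/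
/-!
For `g : G` the subgroup `Q^g` is again a complement of `N` in `M`, and complements of a normal
Hall subgroup with solvable quotient are conjugate, so `Q^g = Q^m` with `m ∈ M`; this is the
Frattini argument `G = M · N_G(Q) = N · N_G(Q)`. For `x ∈ N ∩ N_G(Q)` the commutators `[x, Q]` lie
in `N ∩ Q = 1`, so `x` centralizes `Q`.

Conjugacy of two complements `H`, `K` of `N` goes by induction on `|G|`. Choose `L ⊴ G` containing
`N` with `L/N` a nontrivial `p`-group. Then `H ∩ L` and `K ∩ L` are Sylow `p`-subgroups of `L`, so
after conjugating `K` they coincide, say with `P`, and `H`, `K` both normalize `P`. If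
`N_G(P) < G` we induct inside `N_G(P)`; otherwise `P ⊴ G` and we induct in `G/P`.
-/

open Pointwise

namespace Subgroup

variable {G : Type*} [Group G]

theorem conj_smul_eq_self_iff_mem_normalizer {H : Subgroup G} {g : G} :
    MulAut.conj g • H = H ↔ g ∈ normalizer (H : Set G) :=
  mem_normalizer_iff_map_conj_eq.symm

theorem inf_normalizer_eq_inf_centralizer {N Q : Subgroup G} [N.Normal] (hNQ : N ⊓ Q = ⊥) :
    N ⊓ normalizer (Q : Set G) = N ⊓ centralizer (Q : Set G) := by
  refine le_antisymm (le_inf inf_le_left ?_) (inf_le_inf_left _ (centralizer_le_normalizer _))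
  rw [← commutator_eq_bot_iff_le_centralizer, eq_bot_iff, ← hNQ]
  exact le_inf ((commutator_mono inf_le_left le_rfl).trans (commutator_le_left N Q))
    (le_normalizer_iff_commutator_le_right.mp inf_le_right)

theorem IsComplement'.subgroupOf_of_right_le {H K L : Subgroup G} (h : IsComplement' H K)
    (hKL : K ≤ L) : IsComplement' (H.subgroupOf L) (K.subgroupOf L) := by
  refine isComplement'_of_disjoint_and_mul_eq_univ ?_ (Set.eq_univ_iff_forall.mpr fun t => ?_)
  · rw [disjoint_def]
    intro x hxH hxK
    exact Subtype.ext (disjoint_def.mp h.disjoint hxH hxK)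
  · obtain ⟨⟨a, b⟩, hab⟩ := h.2 t
    have hb : (b : G) ∈ L := hKL b.2
    have ha : (a : G) ∈ L := by
      simpa [← hab] using L.mul_mem t.2 (L.inv_mem hb)
    exact ⟨⟨a, ha⟩, a.2, ⟨b, hb⟩, b.2, Subtype.ext hab⟩

theorem IsComplement'.subgroupOf_of_left_le {H K L : Subgroup G} (h : IsComplement' H K)
    (hHL : H ≤ L) : IsComplement' (H.subgroupOf L) (K.subgroupOf L) :=
  (h.symm.subgroupOf_of_right_le hHL).symm

theorem IsComplement'.map {G' : Type*} [Group G'] {H K : Subgroup G} (h : IsComplement' H K)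
    {f : G →* G'} (hf : Function.Surjective f) (hker : f.ker ≤ K) :
    IsComplement' (H.map f) (K.map f) := by
  refine isComplement'_of_disjoint_and_mul_eq_univ ?_ (Set.eq_univ_iff_forall.mpr fun y => ?_)
  · rw [disjoint_def]
    rintro _ ⟨a, ha, rfl⟩ ⟨b, hb, hba⟩
    have haK : a ∈ K := by
      simpa using K.mul_mem hb (hker (show b⁻¹ * a ∈ f.ker by simp [hba]))
    simp [disjoint_def.mp h.disjoint ha haK]
  · obtain ⟨g, rfl⟩ := hf y
    obtain ⟨⟨a, b⟩, hab⟩ := h.2 g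
    exact ⟨f a, mem_map_of_mem f a.2, f b, mem_map_of_mem f b.2, by simp [← map_mul, ← hab]⟩

theorem IsComplement'.smul {H K : Subgroup G} (h : IsComplement' H K) (φ : MulAut G) :
    IsComplement' (φ • H) (φ • K) :=
  h.map φ.surjective (((MonoidHom.ker_eq_bot_iff _).mpr φ.injective).trans_le bot_le)

theorem exists_normal_isMulCommutative_ne_bot [Group.IsSolvable G] [Nontrivial G] :
    ∃ B : Subgroup G, B.Normal ∧ B ≠ ⊥ ∧ IsMulCommutative B := by
  classical
  have h : ∃ n, derivedSeries G (n + 1) = ⊥ := by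
    obtain ⟨n, hn⟩ := Group.IsSolvable.solvable (G := G)
    exact ⟨n, eq_bot_iff.mpr (hn ▸ derivedSeries_antitone G n.le_succ)⟩
  refine ⟨derivedSeries G (Nat.find h), derivedSeries_normal _ _, ?_,
    commutator_self_eq_bot_iff.mp (Nat.find_spec h)⟩
  rcases hn : Nat.find h with _ | n
  · simp
  · exact Nat.find_min h (hn ▸ n.lt_succ_self)

theorem exists_normal_isPGroup_ne_bot [Finite G] [Group.IsSolvable G] [Nontrivial G] :
    ∃ p, p.Prime ∧ ∃ A : Subgroup G, A.Normal ∧ A ≠ ⊥ ∧ IsPGroup p A := by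
  obtain ⟨B, hB, hB₁, hBc⟩ := exists_normal_isMulCommutative_ne_bot (G := G)
  obtain ⟨p, hp, hpB⟩ := Nat.exists_prime_and_dvd ((one_lt_card_iff_ne_bot B).mpr hB₁).ne'
  have : Fact p.Prime := ⟨hp⟩
  let P : Sylow p B := default
  -- a normal Sylow subgroup is characteristic, so its image is normal in `G`
  have : (P : Subgroup B).Characteristic :=
    P.characteristic_of_normal (normal_of_isMulCommutative _)
  refine ⟨p, hp, (P : Subgroup B).map B.subtype, inferInstance, ?_, P.isPGroup'.map _⟩
  rw [Ne, map_eq_bot_iff_of_injective _ B.subtype_injective]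
  exact P.ne_bot_of_dvd_card hpB

theorem map_conj_smul {G' : Type*} [Group G'] (f : G →* G') (g : G) (H : Subgroup G) :
    (MulAut.conj g • H).map f = MulAut.conj (f g) • H.map f := by
  simp only [pointwise_smul_def]
  ext
  simp

theorem conjNormal_smul_subgroupOf {M : Subgroup G} [M.Normal] (g : G) (H : Subgroup G) :
    (MulAut.conjNormal g : MulAut M) • H.subgroupOf M = (MulAut.conj g • H).subgroupOf M := by
  ext x
  simp [mem_pointwise_smul_iff_inv_smul_mem, mem_subgroupOf]

theorem conj_smul_eq_of_subgroupOf {T H K : Subgroup G} (hHT : H ≤ T) (hKT : K ≤ T) {x : T}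
    (hx : MulAut.conj x • K.subgroupOf T = H.subgroupOf T) : MulAut.conj (x : G) • K = H := by
  rwa [conj_smul_subgroupOf hKT, subgroupOf_inj, inf_of_le_left (conj_smul_le_of_le hKT x),
    inf_of_le_left hHT] at hx

theorem le_normalizer_inf_of_normal (H L : Subgroup G) [L.Normal] :
    H ≤ normalizer ((H ⊓ L : Subgroup G) : Set G) :=
  (le_inf le_normalizer le_normalizer_of_normal).trans inf_normalizer_le_normalizer_inf

theorem IsComplement'.exists_conj_smul_eq_of_isPGroup [Finite G] {p : ℕ} [Fact p.Prime]
    {N H K : Subgroup G} (hH : IsComplement' N H) (hK : IsComplement' N K) (hHp : IsPGroup p H)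
    (hpN : ¬ p ∣ Nat.card N) : ∃ g : G, MulAut.conj g • K = H := by
  have hKp : IsPGroup p K := by
    obtain ⟨n, hn⟩ := IsPGroup.iff_card.mp hHp
    exact IsPGroup.of_card (n := n) (by rw [← hK.symm.index_eq_card, hH.symm.index_eq_card, hn])
  let P : Sylow p G := hHp.toSylow (by rwa [hH.index_eq_card])
  let R : Sylow p G := hKp.toSylow (by rwa [hK.index_eq_card])
  obtain ⟨g, hg⟩ := MulAction.exists_smul_eq G R P
  exact ⟨g, congrArg Sylow.toSubgroup hg⟩

theorem IsComplement'.exists_conj_smul_inf_eq [Finite G] {p : ℕ} [Fact p.Prime]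
    {N H K L : Subgroup G} [L.Normal] (hH : IsComplement' N H) (hK : IsComplement' N K)
    (hNL : N ≤ L) (hHL : IsPGroup p (H ⊓ L : Subgroup G)) (hpN : ¬ p ∣ Nat.card N) :
    ∃ g : G, MulAut.conj g • K ⊓ L = H ⊓ L := by
  obtain ⟨y, hy⟩ := (hH.subgroupOf_of_left_le hNL).exists_conj_smul_eq_of_isPGroup
    (hK.subgroupOf_of_left_le hNL) (by rw [← inf_subgroupOf_right]; exact hHL.comap_subtype)
    (by rwa [Nat.card_congr (subgroupOfEquivOfLe hNL).toEquiv])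
  rw [← inf_subgroupOf_right K, ← inf_subgroupOf_right H] at hy
  refine ⟨y, ?_⟩
  rw [← conj_smul_eq_of_subgroupOf inf_le_right inf_le_right hy, smul_inf,
    Normal.conj_smul_eq_self _ L]

theorem IsComplement'.exists_normal_isPGroup_inf [Finite G] {N H : Subgroup G} [N.Normal]
    [Group.IsSolvable H] [Nontrivial H] (hH : IsComplement' N H) :
    ∃ p, p.Prime ∧ ∃ L : Subgroup G, L.Normal ∧ N ≤ L ∧ H ⊓ L ≠ ⊥ ∧
      IsPGroup p (H ⊓ L : Subgroup G) := by
  let e : G ⧸ N ≃* H := hH.symm.QuotientMulEquiv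
  have : Group.IsSolvable (G ⧸ N) :=
    Group.isSolvable_of_isSolvable_injective (f := e.toMonoidHom) e.injective
  have : Nontrivial (G ⧸ N) := e.surjective.nontrivial
  obtain ⟨p, hp, A, hA, hA₁, hAp⟩ := exists_normal_isPGroup_ne_bot (G := G ⧸ N)
  have hNL : N ≤ A.comap (QuotientGroup.mk' N) := by
    simpa using MonoidHom.ker_le_comap (QuotientGroup.mk' N) A
  refine ⟨p, hp, A.comap (QuotientGroup.mk' N), hA.comap _, hNL, fun hHL => hA₁ ?_, ?_⟩
  · have hLN : A.comap (QuotientGroup.mk' N) ≤ N := by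
      have := hH.subgroupOf_of_left_le hNL
      rwa [subgroupOf_eq_bot.mpr (disjoint_iff.mpr hHL), isComplement'_bot_right,
        subgroupOf_eq_top] at this
    rw [← map_comap_eq_self_of_surjective (QuotientGroup.mk'_surjective N) A, eq_bot_iff,
      ← QuotientGroup.map_mk'_self N]
    exact map_mono hLN
  · rintro ⟨x, hxH, hxL⟩
    obtain ⟨k, hk⟩ := hAp ⟨_, hxL⟩
    have hxN : x ^ p ^ k ∈ N := by
      rw [← QuotientGroup.eq_one_iff, QuotientGroup.mk_pow]
      exact congrArg Subtype.val hk
    exact ⟨k, Subtype.ext (disjoint_def.mp hH.disjoint hxN (H.pow_mem hxH _))⟩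

variable (G) in
def SolvableComplementsConjugate : Prop :=
  ∀ (N H K : Subgroup G) [N.Normal] [Group.IsSolvable H], (Nat.card N).Coprime (Nat.card H) →
    IsComplement' N H → IsComplement' N K → ∃ g : G, MulAut.conj g • K = H

theorem exists_conj_smul_eq_of_le {T N H K : Subgroup G} [N.Normal] [Group.IsSolvable H]
    (hT : SolvableComplementsConjugate T) (hcop : (Nat.card N).Coprime (Nat.card H))
    (hH : IsComplement' N H) (hK : IsComplement' N K) (hHT : H ≤ T) (hKT : K ≤ T) :
    ∃ g : G, MulAut.conj g • K = H := by
  let e : H.subgroupOf T ≃* H := subgroupOfEquivOfLe hHT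
  have : Group.IsSolvable (H.subgroupOf T) :=
    Group.isSolvable_of_isSolvable_injective (f := e.toMonoidHom) e.injective
  have hcop' : (Nat.card (N.subgroupOf T)).Coprime (Nat.card (H.subgroupOf T)) := by
    rw [Nat.card_congr e.toEquiv]
    exact hcop.coprime_dvd_left (card_comap_dvd_of_injective N T.subtype T.subtype_injective)
  obtain ⟨x, hx⟩ := hT _ _ _ hcop' (hH.subgroupOf_of_right_le hHT) (hK.subgroupOf_of_right_le hKT)
  exact ⟨x, conj_smul_eq_of_subgroupOf hHT hKT hx⟩

theorem exists_conj_smul_eq_of_normal_le {P N H K : Subgroup G} [P.Normal] [N.Normal]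
    [Group.IsSolvable H] (hP : SolvableComplementsConjugate (G ⧸ P))
    (hcop : (Nat.card N).Coprime (Nat.card H)) (hH : IsComplement' N H) (hK : IsComplement' N K)
    (hPH : P ≤ H) (hPK : P ≤ K) : ∃ g : G, MulAut.conj g • K = H := by
  let ρ := QuotientGroup.mk' P
  have hρ : Function.Surjective ρ := QuotientGroup.mk'_surjective P
  have : (N.map ρ).Normal := Normal.map ‹_› ρ hρ
  have : Group.IsSolvable (H.map ρ) := Group.isSolvable_of_surjective (ρ.subgroupMap_surjective H)
  have hcop' : (Nat.card (N.map ρ)).Coprime (Nat.card (H.map ρ)) :=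
    (hcop.coprime_dvd_left (card_map_dvd N ρ)).coprime_dvd_right (card_map_dvd H ρ)
  obtain ⟨z, hz⟩ := hP _ _ _ hcop' (hH.map hρ (by rwa [QuotientGroup.ker_mk']))
    (hK.map hρ (by rwa [QuotientGroup.ker_mk']))
  obtain ⟨g, rfl⟩ := hρ z
  have hPgK : P ≤ MulAut.conj g • K := by
    rw [← Normal.conj_smul_eq_self g P]
    exact pointwise_smul_le_pointwise_smul_iff.mpr hPK
  refine ⟨g, ?_⟩
  calc MulAut.conj g • K = ((MulAut.conj g • K).map ρ).comap ρ :=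
        (comap_map_eq_self (by rwa [QuotientGroup.ker_mk'])).symm
    _ = (H.map ρ).comap ρ := by rw [map_conj_smul, hz]
    _ = H := comap_map_eq_self (by rwa [QuotientGroup.ker_mk'])

theorem solvableComplementsConjugate (G : Type*) [Group G] [Finite G] :
    SolvableComplementsConjugate G := by
  induction hn : Nat.card G using Nat.strong_induction_on generalizing G with
  | _ n ih =>
  intro N H K _ _ hcop hH hK
  rcases subsingleton_or_nontrivial H with hH₁ | hH₁
  · have hHbot : H = ⊥ := eq_bot_of_subsingleton H
    have hKbot : K = ⊥ := by
      rw [← card_eq_one, ← hK.symm.index_eq_card, hH.symm.index_eq_card, card_eq_one, hHbot]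
    exact ⟨1, by rw [hHbot, hKbot, smul_bot]⟩
  obtain ⟨p, hp, L, hL, hNL, hHL, hHLp⟩ := hH.exists_normal_isPGroup_inf
  have : Fact p.Prime := ⟨hp⟩
  have hpN : ¬ p ∣ Nat.card N := fun hpN =>
    have hpH : p ∣ Nat.card H := ((hHLp.card_eq_or_dvd).resolve_left (by rwa [card_eq_one])).trans
      (card_dvd_of_le inf_le_left)
    hp.one_lt.ne' (Nat.eq_one_of_dvd_coprimes hcop hpN hpH)
  obtain ⟨y, hy⟩ := hH.exists_conj_smul_inf_eq hK hNL hHLp hpN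
  have hK' : IsComplement' N (MulAut.conj y • K) := by simpa using hK.smul (MulAut.conj y)
  suffices ∃ x : G, MulAut.conj x • MulAut.conj y • K = H by
    obtain ⟨x, hx⟩ := this
    exact ⟨x * y, by rwa [map_mul, mul_smul]⟩
  have hK'T : MulAut.conj y • K ≤ normalizer ((H ⊓ L : Subgroup G) : Set G) :=
    hy ▸ le_normalizer_inf_of_normal _ L
  by_cases hT : normalizer ((H ⊓ L : Subgroup G) : Set G) = ⊤
  · have : (H ⊓ L).Normal := normalizer_eq_top_iff.mp hT
    have hlt : Nat.card (G ⧸ (H ⊓ L)) < n := by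
      rw [← hn, ← index_mul_card (H ⊓ L)]
      exact lt_mul_of_one_lt_right Nat.card_pos ((one_lt_card_iff_ne_bot _).mpr hHL)
    exact exists_conj_smul_eq_of_normal_le (ih _ hlt _ rfl) hcop hH hK' inf_le_left
      (hy ▸ inf_le_left)
  · have hlt : Nat.card (normalizer ((H ⊓ L : Subgroup G) : Set G)) < n :=
      hn ▸ lt_of_le_of_ne (card_le_card_group _) (mt (eq_top_of_card_eq _) hT)
    exact exists_conj_smul_eq_of_le (ih _ hlt _ rfl) hcop hH hK' (le_normalizer_inf_of_normal H L)
      hK'T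

theorem isComplement'_subgroupOf_of_forall_eq_mul {N Q M : Subgroup G} (hQM : Q ≤ M)
    (hNQ : Disjoint N Q) (hM : ∀ m ∈ M, ∃ n ∈ N, ∃ q ∈ Q, m = n * q) :
    IsComplement' (N.subgroupOf M) (Q.subgroupOf M) := by
  refine isComplement'_of_disjoint_and_mul_eq_univ ?_ (Set.eq_univ_iff_forall.mpr fun t => ?_)
  · rw [disjoint_def]
    intro x hxN hxQ
    exact Subtype.ext (disjoint_def.mp hNQ hxN hxQ)
  · obtain ⟨n, hn, q, hq, htnq⟩ := hM t t.2
    have hnM : n ∈ M := by simpa [htnq] using M.mul_mem t.2 (M.inv_mem (hQM hq))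
    exact ⟨⟨n, hnM⟩, hn, ⟨q, hQM hq⟩, hq, Subtype.ext htnq.symm⟩

theorem exists_mem_mul_mem_normalizer {M Q : Subgroup G}
    (h : ∀ g : G, ∃ m ∈ M, MulAut.conj m • MulAut.conj g • Q = Q) (g : G) :
    ∃ m ∈ M, ∃ t ∈ normalizer (Q : Set G), g = m * t := by
  obtain ⟨m, hm, hmg⟩ := h g
  refine ⟨m⁻¹, M.inv_mem hm, m * g, ?_, by group⟩
  rwa [← conj_smul_eq_self_iff_mem_normalizer, map_mul, mul_smul]

theorem exists_mem_conj_smul_conj_smul_eq [Finite G] {N M Q : Subgroup G} [N.Normal] [M.Normal]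
    [(N.subgroupOf M).Normal] [Group.IsSolvable (Q.subgroupOf M)]
    (hcop : (Nat.card (N.subgroupOf M)).Coprime (Nat.card (Q.subgroupOf M)))
    (hc : IsComplement' (N.subgroupOf M) (Q.subgroupOf M)) (hQM : Q ≤ M) (g : G) :
    ∃ m ∈ M, MulAut.conj m • MulAut.conj g • Q = Q := by
  have hgQM : MulAut.conj g • Q ≤ M := by
    rw [← Normal.conj_smul_eq_self g M]
    exact pointwise_smul_le_pointwise_smul_iff.mpr hQM
  have hgc : IsComplement' (N.subgroupOf M) ((MulAut.conj g • Q).subgroupOf M) := by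
    simpa [conjNormal_smul_subgroupOf] using hc.smul (MulAut.conjNormal g)
  obtain ⟨m, hm⟩ := solvableComplementsConjugate M _ _ _ hcop hc hgc
  exact ⟨m, m.2, conj_smul_eq_of_subgroupOf hQM hgQM hm⟩

end Subgroup

open Subgroup

theorem stmt5_general (G : Type) [Group G] [Fintype G] (N M : Subgroup G)
    [hN : N.Normal] [hM : M.Normal]
    (hcop : (Nat.card N).Coprime (N.relIndex M))
    [hNsub : (N.subgroupOf M).Normal]
    (hsol : IsSolvable (M ⧸ N.subgroupOf M))
    (Q : Subgroup G) (hQM : Q ≤ M) (hNQ : N ⊓ Q = ⊥)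
    (hNQM : ∀ m ∈ M, ∃ n ∈ N, ∃ q ∈ Q, m = n * q) :
    (∀ g : G, ∃ n ∈ N, ∃ t ∈ Subgroup.normalizer (Q : Set G), g = n * t) ∧
      N ⊓ Subgroup.normalizer (Q : Set G) = N ⊓ Subgroup.centralizer (Q : Set G) := by
  have hc := isComplement'_subgroupOf_of_forall_eq_mul hQM (disjoint_iff.mpr hNQ) hNQM
  have : Group.IsSolvable (M ⧸ N.subgroupOf M) := hsol
  have : Group.IsSolvable (Q.subgroupOf M) :=
    Group.isSolvable_of_surjective (f := hc.symm.QuotientMulEquiv.toMonoidHom)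
      hc.symm.QuotientMulEquiv.surjective
  have hcop' : (Nat.card (N.subgroupOf M)).Coprime (Nat.card (Q.subgroupOf M)) := by
    rw [← hc.symm.index_eq_card]
    exact hcop.coprime_dvd_left (card_comap_dvd_of_injective N M.subtype M.subtype_injective)
  refine ⟨fun g => ?_, inf_normalizer_eq_inf_centralizer hNQ⟩
  obtain ⟨m, hm, t, ht, rfl⟩ := exists_mem_mul_mem_normalizer
    (exists_mem_conj_smul_conj_smul_eq hcop' hc hQM) g
  obtain ⟨n, hn, q, hq, rfl⟩ := hNQM m hm
  exact ⟨n, hn, q * t, mul_mem (le_normalizer hq) ht, mul_assoc n q t⟩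

/-- Frattini-type argument: if `N ≤ M` are normal subgroups of the finite group `G`,
`N` is a Hall subgroup of `M`, `M/N` is solvable, and `Q` is a complement of `N` in `M`,
then `G = N·N_G(Q)` and `N ∩ N_G(Q) = C_N(Q)`. -/
theorem stmt5 (G : Type) [Group G] [Fintype G] (N M : Subgroup G)
    [hN : N.Normal] [hM : M.Normal] (hNM : N ≤ M)
    (hcop : (Nat.card N).Coprime (N.relIndex M))
    [hNsub : (N.subgroupOf M).Normal]
    (hsol : IsSolvable (M ⧸ N.subgroupOf M))
    (Q : Subgroup G) (hQM : Q ≤ M) (hNQ : N ⊓ Q = ⊥)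
    (hNQM : ∀ m ∈ M, ∃ n ∈ N, ∃ q ∈ Q, m = n * q) :
    (∀ g : G, ∃ n ∈ N, ∃ t ∈ Subgroup.normalizer (Q : Set G), g = n * t) ∧
      N ⊓ Subgroup.normalizer (Q : Set G) = N ⊓ Subgroup.centralizer (Q : Set G) :=
  stmt5_general G N M (hN := hN) (hM := hM) hcop (hNsub := hNsub) hsol Q hQM hNQ hNQM
end
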